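/- arXiv:0806.1035 — 3 statements merged into one kernel-verified Lean document; each statement's English description precedes it below -/
import Mathlib

section
/- Let (Ω, μ) be a measure space, let M₁, M₂ > 0, and let τ, ϑ : Ω → ℝ be measurable functions with 0 < τ(ω) ≤ M₁ and 0 ≤ ϑ(ω) ≤ M₂ for μ-almost every ω. Let γ ∈ (0,1) and λ ∈ ℂ, and for k ∈ ℤ define F_k(ω) = (log γ − ϑ(ω))/τ(ω) − 2πik/τ(ω). Assume that for every k ∈ ℤ there exists β_k > 0 such that |λ − F_k(ω)| ≥ β_k for μ-almost every ω ∈ Ω. Then there exists δ > 0 such that |γ·e^{−ϑ(ω)−λτ(ω)} − 1| ≥ δ for μ-almost every ω ∈ Ω. -/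
/-!
Write `γ e^{-ϑ-λτ} = e^z` with `z = log γ - ϑ - λτ`; then `z - 2πik = -τ (λ - F_k)`.
Since `exp - 1` vanishes only on `2πiℤ`, periodicity and compactness of a truncated
fundamental strip bound `|e^z - 1|` below as soon as `Re z` is bounded and `z` stays a fixed
distance away from the point `2πik` nearest to it. Only finitely many `k` can be nearest,
because `|Im z| ≤ |λ| M₁`, so finitely many `β_k` give a uniform `β`. The distance is at least
`τ β`, which is only useful when `τ` is not small, and at least `-Re z ≥ -log γ - |Re λ| τ`,
which is useful when it is.
-/

open MeasureTheory Complex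
open scoped Real

lemma exists_gt_eventually_forall_finset_le {ι α R : Type*} [LinearOrder R] [NoMaxOrder R]
    {l : Filter α} {f : ι → α → R} {a : R} (S : Finset ι)
    (h : ∀ i ∈ S, ∃ b > a, ∀ᶠ x in l, b ≤ f i x) : ∃ b > a, ∀ᶠ x in l, ∀ i ∈ S, b ≤ f i x := by
  classical
  induction S using Finset.induction_on with
  | empty =>
    obtain ⟨b, hb⟩ := exists_gt a
    exact ⟨b, hb, by simp⟩
  | insert i S _ ih =>
    obtain ⟨b, hb, hS⟩ := ih fun j hj => h j (Finset.mem_insert_of_mem hj)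
    obtain ⟨b', hb', hi⟩ := h i (Finset.mem_insert_self i S)
    refine ⟨min b b', lt_min hb hb', ?_⟩
    filter_upwards [hS, hi] with x hxS hxi
    simpa only [Finset.forall_mem_insert] using ⟨min_le_right _ _ |>.trans hxi,
      fun j hj => min_le_left _ _ |>.trans (hxS j hj)⟩

lemma abs_sub_mul_round_div_le (x : ℝ) {p : ℝ} (hp : 0 < p) :
    |x - p * round (x / p)| ≤ p / 2 := by
  rw [show x - p * round (x / p) = p * (x / p - round (x / p)) by field_simp, abs_mul,
    abs_of_pos hp]
  linarith [mul_le_mul_of_nonneg_left (abs_sub_round (x / p)) hp.le]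

lemma mem_Icc_natCeil_of_abs_sub_mul_le {y R p : ℝ} {k : ℤ} (hp : 0 < p) (hy : |y| ≤ R)
    (hk : |y - p * k| ≤ p) : k ∈ Finset.Icc (-(⌈R / p⌉₊ + 1 : ℤ)) (⌈R / p⌉₊ + 1) := by
  have hpk : p * |(k : ℝ)| ≤ p * (R / p + 1) := by
    rw [mul_add, mul_div_cancel₀ _ hp.ne', mul_one, ← abs_of_pos hp, ← abs_mul, abs_of_pos hp]
    linarith [abs_sub_abs_le_abs_sub (p * k) y, abs_sub_comm (p * k) y]
  have hk' : |(k : ℝ)| ≤ (⌈R / p⌉₊ : ℝ) + 1 :=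
    (le_of_mul_le_mul_left hpk hp).trans (by linarith [Nat.le_ceil (R / p)])
  rw [Finset.mem_Icc, ← abs_le]
  exact_mod_cast hk'

lemma div_le_max_mul_sub_mul (a t : ℝ) {β c : ℝ} (hβ : 0 < β) (hc : 0 ≤ c) :
    a * β / (β + c) ≤ max (t * β) (a - c * t) := by
  rw [div_le_iff₀ (by positivity)]
  rcases le_total (a * β) (t * β * (β + c)) with h | h
  · nlinarith [le_max_left (t * β) (a - c * t)]
  · have : t * (β + c) ≤ a := le_of_mul_le_mul_right (by linarith) hβ
    nlinarith [le_max_right (t * β) (a - c * t)]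

namespace Complex

lemma exp_ne_one_of_abs_im_lt {z : ℂ} (hz : z ≠ 0) (him : |z.im| < 2 * π) : exp z ≠ 1 := by
  rw [Ne, exp_eq_one_iff]
  rintro ⟨n, rfl⟩
  have hn : |(n : ℝ)| < 1 := by
    simp [abs_mul, abs_of_pos Real.pi_pos] at him
    nlinarith [Real.pi_pos]
  have : n = 0 := Int.abs_lt_one_iff.mp (by exact_mod_cast hn)
  simp [this] at hz

lemma exists_pos_le_norm_exp_sub_one (X : ℝ) {ε : ℝ} (hε : 0 < ε) :
    ∃ δ > 0, ∀ z : ℂ, |z.re| ≤ X →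
      (∀ k : ℤ, |z.im - 2 * π * k| ≤ π → ε ≤ ‖z - 2 * π * k * I‖) → δ ≤ ‖exp z - 1‖ := by
  set C : Set ℂ := (Set.Icc (-X) X ×ℂ Set.Icc (-π) π) ∩ {w | ε ≤ ‖w‖}
  have hC : IsCompact C := (isCompact_Icc.reProdIm isCompact_Icc).inter_right
    (isClosed_le continuous_const continuous_norm)
  have hpos : ∀ w ∈ C, 0 < ‖exp w - 1‖ := by
    rintro w ⟨⟨-, hw_im⟩, hw_norm⟩
    refine norm_pos_iff.mpr (sub_ne_zero.mpr (exp_ne_one_of_abs_im_lt ?_ ?_))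
    · rintro rfl
      have : ε ≤ 0 := by simpa using hw_norm
      linarith
    · linarith [abs_le.mpr hw_im, Real.pi_pos]
  obtain ⟨δ, hδ, hδC⟩ := hC.exists_forall_le' (by fun_prop) hpos
  refine ⟨δ, hδ, fun z hre hdist => ?_⟩
  set k := round (z.im / (2 * π))
  have hk : |z.im - 2 * π * k| ≤ π := by
    simpa using abs_sub_mul_round_div_le z.im (by positivity : (0 : ℝ) < 2 * π)
  have hmem : z - 2 * π * k * I ∈ C := by
    refine ⟨⟨?_, ?_⟩, hdist k hk⟩
    · simpa using abs_le.mp hre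
    · simpa using abs_le.mp hk
  have := hδC _ hmem
  rwa [show (2 * π * k * I : ℂ) = k * (2 * π * I) by ring, exp_periodic.sub_int_mul_eq] at this

lemma ofReal_sub_mul_sub_ofReal_mul_I_eq_neg_mul (a b t : ℝ) (l : ℂ) (ht : t ≠ 0) :
    (a : ℂ) - l * t - b * I = -t * (l - (((a / t : ℝ) : ℂ) - ((b / t : ℝ) : ℂ) * I)) := by
  have ht' : (t : ℂ) ≠ 0 := ofReal_ne_zero.mpr ht
  push_cast
  field_simp
  ring

lemma div_le_norm_ofReal_sub_mul_sub_ofReal_mul_I {a b c t β : ℝ} {l : ℂ} (ht : 0 < t)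
    (hβ : 0 < β) (ha : a ≤ -c)
    (hsep : β ≤ ‖l - (((a / t : ℝ) : ℂ) - ((b / t : ℝ) : ℂ) * I)‖) :
    c * β / (β + |l.re|) ≤ ‖(a : ℂ) - l * t - b * I‖ := by
  have hre : ((a : ℂ) - l * t - b * I).re = a - l.re * t := by simp
  calc c * β / (β + |l.re|) ≤ max (t * β) (c - |l.re| * t) :=
        div_le_max_mul_sub_mul _ _ hβ (abs_nonneg _)
    _ ≤ ‖(a : ℂ) - l * t - b * I‖ := by
      refine max_le ?_ ?_
      · rw [ofReal_sub_mul_sub_ofReal_mul_I_eq_neg_mul _ _ _ _ ht.ne', norm_mul, norm_neg,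
          norm_real, Real.norm_of_nonneg ht.le]
        exact mul_le_mul_of_nonneg_left hsep ht.le
      · have := abs_re_le_norm ((a : ℂ) - l * t - b * I)
        rw [hre] at this
        nlinarith [neg_abs_le l.re, neg_abs_le (a - l.re * t)]

end Complex

theorem stmt11_general {Ω : Type*} [MeasurableSpace Ω] (μ : Measure Ω)
    (M₁ M₂ : ℝ)
    (τ ϑ : Ω → ℝ)
    (hτb : ∀ᵐ ω ∂μ, 0 < τ ω ∧ τ ω ≤ M₁)
    (hϑb : ∀ᵐ ω ∂μ, 0 ≤ ϑ ω ∧ ϑ ω ≤ M₂)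
    (γ : ℝ) (hγ : γ ∈ Set.Ioo (0:ℝ) 1) (l : ℂ)
    (hsep : ∀ k : ℤ, ∃ β > (0:ℝ), ∀ᵐ ω ∂μ,
      β ≤ ‖(l -
        ((((Real.log γ - ϑ ω) / τ ω : ℝ) : ℂ)
          - (((2 * Real.pi * (k : ℝ) / τ ω : ℝ)) : ℂ) * Complex.I))‖) :
    ∃ δ > (0:ℝ), ∀ᵐ ω ∂μ,
      δ ≤ ‖((γ : ℂ) * Complex.exp (-(ϑ ω : ℂ) - l * (τ ω : ℂ)) - 1)‖ := by
  have hlog : 0 < -Real.log γ := neg_pos.mpr (Real.log_neg hγ.1 hγ.2)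
  obtain ⟨β, hβ, hsepK⟩ := exists_gt_eventually_forall_finset_le
    (Finset.Icc (-(⌈‖l‖ * M₁ / (2 * π)⌉₊ + 1 : ℤ)) (⌈‖l‖ * M₁ / (2 * π)⌉₊ + 1)) fun k _ => hsep k
  obtain ⟨δ, hδ, hexp⟩ := exists_pos_le_norm_exp_sub_one (-Real.log γ + M₂ + ‖l‖ * M₁)
    (ε := -Real.log γ * β / (β + |l.re|)) (by positivity)
  refine ⟨δ, hδ, ?_⟩
  filter_upwards [hτb, hϑb, hsepK] with ω ⟨hτ0, hτM⟩ ⟨hϑ0, hϑM⟩ hsepω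
  set z : ℂ := ((Real.log γ - ϑ ω : ℝ) : ℂ) - l * τ ω
  have hz : (γ : ℂ) * exp (-(ϑ ω : ℂ) - l * τ ω) = exp z := by
    rw [← Real.exp_log hγ.1, ofReal_exp, ← exp_add]
    congr 1
    push_cast [z]
    ring
  have hlτ : |l.re| * τ ω ≤ ‖l‖ * M₁ := mul_le_mul (abs_re_le_norm l) hτM hτ0.le (norm_nonneg l)
  have him : |z.im| ≤ ‖l‖ * M₁ := by
    rw [show z.im = -(l.im * τ ω) by simp [z], abs_neg, abs_mul, abs_of_pos hτ0]
    exact mul_le_mul (abs_im_le_norm l) hτM hτ0.le (norm_nonneg l)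
  rw [hz]
  refine hexp z ?_ fun k hk => ?_
  · rw [show z.re = Real.log γ - ϑ ω - l.re * τ ω by simp [z], abs_le]
    constructor <;> nlinarith [neg_abs_le l.re, le_abs_self l.re]
  · have hkK := mem_Icc_natCeil_of_abs_sub_mul_le (by positivity) him
      (hk.trans (by linarith [Real.pi_pos]))
    rw [show z - 2 * π * k * I = ((Real.log γ - ϑ ω : ℝ) : ℂ) - l * τ ω
      - ((2 * π * k : ℝ) : ℂ) * I by push_cast [z]; ring]
    exact div_le_norm_ofReal_sub_mul_sub_ofReal_mul_I hτ0 hβ (by linarith) (hsepω k hkK)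

/-- Let `(Ω,μ)` be a measure space, `M₁, M₂ > 0`, and `τ, ϑ : Ω → ℝ`
measurable with `0 < τ ≤ M₁` and `0 ≤ ϑ ≤ M₂` a.e. Let `γ ∈ (0,1)`, `λ ∈ ℂ`, and
`F_k(ω) = (log γ - ϑ(ω))/τ(ω) - 2πik/τ(ω)`. If for every `k ∈ ℤ` there is `β_k > 0`
with `|λ - F_k(ω)| ≥ β_k` a.e., then there is `δ > 0` with
`|γ·e^{-ϑ(ω)-λτ(ω)} - 1| ≥ δ` a.e. -/
theorem stmt11 {Ω : Type*} [MeasurableSpace Ω] (μ : Measure Ω)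
    (M₁ M₂ : ℝ) (hM₁ : 0 < M₁) (hM₂ : 0 < M₂)
    (τ ϑ : Ω → ℝ) (hτm : Measurable τ) (hϑm : Measurable ϑ)
    (hτb : ∀ᵐ ω ∂μ, 0 < τ ω ∧ τ ω ≤ M₁)
    (hϑb : ∀ᵐ ω ∂μ, 0 ≤ ϑ ω ∧ ϑ ω ≤ M₂)
    (γ : ℝ) (hγ : γ ∈ Set.Ioo (0:ℝ) 1) (l : ℂ)
    (hsep : ∀ k : ℤ, ∃ β > (0:ℝ), ∀ᵐ ω ∂μ,
      β ≤ ‖(l -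
        ((((Real.log γ - ϑ ω) / τ ω : ℝ) : ℂ)
          - (((2 * Real.pi * (k : ℝ) / τ ω : ℝ)) : ℂ) * Complex.I))‖) :
    ∃ δ > (0:ℝ), ∀ᵐ ω ∂μ,
      δ ≤ ‖((γ : ℂ) * Complex.exp (-(ϑ ω : ℂ) - l * (τ ω : ℂ)) - 1)‖ :=
  stmt11_general μ M₁ M₂ τ ϑ hτb hϑb γ hγ l hsep
end

section
/- Let D ⊆ ℝ^N be a convex open set and x ∈ D. Then for all Borel measurable functions g : ℝ^N → [0,∞] and w : ℝ × ℝ^N → [0,∞] one has ∫_{ℝ^N} ( ∫_{−t₋(x,v)}^{t₊(x,v)} g(x + t·v)·w(t,v) dt ) dv = ∫_{ℝ∖{0}} |t|^{−N} ( ∫_D g(y)·w(t, (y−x)/t) dy ) dt, with both sides valued in [0,∞]. -/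
open MeasureTheory Set
open scoped ENNReal

/-- Forward exit time `t₊(x,v) = sup {t > 0 : x + s•v ∈ D for all 0 < s < t}`,
valued in `[0,∞]`, equal to `0` if no such `t` exists. -/
noncomputable def tPlus {N : ℕ} (D : Set (EuclideanSpace ℝ (Fin N)))
    (x v : EuclideanSpace ℝ (Fin N)) : ℝ≥0∞ :=
  sSup (ENNReal.ofReal '' {t : ℝ | 0 < t ∧ ∀ s : ℝ, 0 < s → s < t → x + s • v ∈ D})

/-- Backward exit time `t₋(x,v) = t₊(x,-v)`. -/
noncomputable def tMinus {N : ℕ} (D : Set (EuclideanSpace ℝ (Fin N)))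
    (x v : EuclideanSpace ℝ (Fin N)) : ℝ≥0∞ :=
  tPlus D x (-v)

/-- Sojourn time `τ(x,v) = t₋(x,v) + t₊(x,v)`. -/
noncomputable def sojourn {N : ℕ} (D : Set (EuclideanSpace ℝ (Fin N)))
    (x v : EuclideanSpace ℝ (Fin N)) : ℝ≥0∞ :=
  tMinus D x v + tPlus D x v

/-! Convexity makes `{t | x + t • v ∈ D}` exactly the interval `(-t₋(x,v), t₊(x,v))`, so the
left-hand side is the integral of `g (x + t • v) * w (t, v)` over `{(t, v) | x + t • v ∈ D}`.
Tonelli's theorem moves the `t`-integral outside, and for each `t ≠ 0` the substitution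
`y = x + t • v` has Jacobian `|t|^N`. -/

section ExitTime

variable {N : ℕ} {D : Set (EuclideanSpace ℝ (Fin N))} {x : EuclideanSpace ℝ (Fin N)}

theorem ofReal_lt_tPlus_iff (hD : IsOpen D) (hconv : Convex ℝ D) (hx : x ∈ D)
    (v : EuclideanSpace ℝ (Fin N)) {t : ℝ} (ht : 0 ≤ t) :
    ENNReal.ofReal t < tPlus D x v ↔ x + t • v ∈ D := by
  constructor
  · intro h
    obtain ⟨_, ⟨t', ⟨-, ht'⟩, rfl⟩, hlt⟩ := lt_sSup_iff.1 h
    rcases ht.eq_or_lt with rfl | ht0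
    · simpa using hx
    · exact ht' t ht0 ((ENNReal.ofReal_lt_ofReal_iff_of_nonneg ht).1 hlt)
  · intro hmem
    set L := {s : ℝ | x + s • v ∈ D}
    have hL_open : IsOpen L := hD.preimage (by fun_prop)
    have hL_ordConnected : L.OrdConnected := by
      have hL : L = AffineMap.lineMap x (x + v) ⁻¹' D := by
        ext s; simp [L, AffineMap.lineMap_apply, add_comm]
      exact hL ▸ (hconv.affine_preimage _).ordConnected
    obtain ⟨ε, hε, hball⟩ := Metric.isOpen_iff.1 hL_open t hmem
    refine ((ENNReal.ofReal_lt_ofReal_iff (by positivity)).2 (lt_add_of_pos_right t hε)).trans_le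
      (le_sSup ⟨t + ε, ⟨by positivity, fun s hs hs' => ?_⟩, rfl⟩)
    rcases le_or_gt s t with hst | hst
    · exact hL_ordConnected.out (by simpa [L] using hx) hmem ⟨hs.le, hst⟩
    · exact hball (by rw [Real.ball_eq_Ioo]; exact ⟨by linarith, hs'⟩)

theorem coe_lt_tPlus_iff (hD : IsOpen D) (hconv : Convex ℝ D) (hx : x ∈ D)
    (v : EuclideanSpace ℝ (Fin N)) (t : ℝ) :
    (t : EReal) < tPlus D x v ↔ t < 0 ∨ x + t • v ∈ D := by
  rcases lt_or_ge t 0 with ht | ht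
  · exact iff_of_true ((EReal.coe_lt_coe_iff.2 ht).trans_le (EReal.coe_ennreal_nonneg _))
      (Or.inl ht)
  · rw [or_iff_right ht.not_gt, ← ofReal_lt_tPlus_iff hD hconv hx v ht,
      ← EReal.coe_ennreal_lt_coe_ennreal_iff, EReal.coe_ennreal_ofReal, max_eq_left ht]

theorem setOf_neg_tMinus_lt_and_lt_tPlus (hD : IsOpen D) (hconv : Convex ℝ D) (hx : x ∈ D)
    (v : EuclideanSpace ℝ (Fin N)) :
    {t : ℝ | -((tMinus D x v : ℝ≥0∞) : EReal) < (t : ℝ) ∧ (t : ℝ) < ((tPlus D x v : ℝ≥0∞) : EReal)}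
      = {t | x + t • v ∈ D} := by
  ext t
  have hneg : -((tMinus D x v : ℝ≥0∞) : EReal) < t ↔ 0 < t ∨ x + t • v ∈ D := by
    rw [EReal.neg_lt_comm, ← EReal.coe_neg, tMinus, coe_lt_tPlus_iff hD hconv hx, neg_smul_neg,
      neg_lt_zero]
  rw [mem_ofPred_eq, hneg, coe_lt_tPlus_iff hD hconv hx]
  exact ⟨fun ⟨h₁, h₂⟩ => h₁.elim (fun h => h₂.resolve_left h.not_gt) id,
    fun h => ⟨Or.inr h, Or.inr h⟩⟩

end ExitTime

section RaySubstitution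

variable {E : Type*} [NormedAddCommGroup E] [NormedSpace ℝ E] [FiniteDimensional ℝ E]
  [MeasurableSpace E] [BorelSpace E] (μ : Measure E) [μ.IsAddHaarMeasure]

theorem lintegral_comp_inv_smul_sub (f : E → ℝ≥0∞) (x : E) {t : ℝ} (ht : t ≠ 0) :
    ∫⁻ y, f (t⁻¹ • (y - x)) ∂μ = ENNReal.ofReal (|t| ^ Module.finrank ℝ E) * ∫⁻ v, f v ∂μ := by
  calc ∫⁻ y, f (t⁻¹ • (y - x)) ∂μ = ∫⁻ y, f (t⁻¹ • y) ∂μ :=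
        lintegral_sub_right_eq_self (fun y => f (t⁻¹ • y)) x
    _ = ∫⁻ v, f v ∂(μ.map (t⁻¹ • ·)) :=
        (lintegral_map_equiv f (MeasurableEquiv.smul₀ t⁻¹ (inv_ne_zero ht))).symm
    _ = ENNReal.ofReal (|t| ^ Module.finrank ℝ E) * ∫⁻ v, f v ∂μ := by
        rw [Measure.map_addHaar_smul μ (inv_ne_zero ht), lintegral_smul_measure, smul_eq_mul,
          inv_pow, inv_inv, abs_pow]

theorem lintegral_lintegral_eq_setLIntegral_inv_smul_sub (x : E) {F : ℝ × E → ℝ≥0∞}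
    (hF : Measurable F) :
    ∫⁻ v, (∫⁻ t : ℝ, F (t, v)) ∂μ = ∫⁻ t in {t : ℝ | t ≠ 0},
      (ENNReal.ofReal (|t| ^ Module.finrank ℝ E))⁻¹ * ∫⁻ y, F (t, t⁻¹ • (y - x)) ∂μ := by
  rw [lintegral_lintegral_swap (f := fun v t => F (t, v)) (hF.comp measurable_swap).aemeasurable]
  conv_lhs => rw [← restrict_compl_singleton (μ := volume) (0 : ℝ)]
  refine setLIntegral_congr_fun (measurableSet_singleton (0 : ℝ)).compl fun t (ht : t ≠ 0) => ?_
  have hJ : ENNReal.ofReal (|t| ^ Module.finrank ℝ E) ≠ 0 := by positivity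
  rw [lintegral_comp_inv_smul_sub μ (fun v => F (t, v)) x ht,
    ENNReal.inv_mul_cancel_left hJ ENNReal.ofReal_ne_top]

end RaySubstitution

/-- For `D` convex open and `x ∈ D`, for all Borel measurable
`g : ℝ^N → [0,∞]` and `w : ℝ × ℝ^N → [0,∞]`:
`∫_{ℝ^N} ∫_{-t₋(x,v)}^{t₊(x,v)} g(x+t•v)·w(t,v) dt dv
  = ∫_{ℝ∖{0}} |t|^{-N} ∫_D g(y)·w(t,(y-x)/t) dy dt`. -/
theorem stmt14 {N : ℕ} (D : Set (EuclideanSpace ℝ (Fin N))) (hD : IsOpen D)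
    (hconv : Convex ℝ D) (x : EuclideanSpace ℝ (Fin N)) (hx : x ∈ D)
    (g : EuclideanSpace ℝ (Fin N) → ℝ≥0∞) (hg : Measurable g)
    (w : ℝ × EuclideanSpace ℝ (Fin N) → ℝ≥0∞) (hw : Measurable w) :
    (∫⁻ v, ∫⁻ t in {t : ℝ | -((tMinus D x v : ℝ≥0∞) : EReal) < (t : ℝ) ∧
          (t : ℝ) < ((tPlus D x v : ℝ≥0∞) : EReal)},
        g (x + t • v) * w (t, v))
    = ∫⁻ t in {t : ℝ | t ≠ 0},
        (ENNReal.ofReal (|t| ^ N))⁻¹ * ∫⁻ y in D, g y * w (t, t⁻¹ • (y - x)) := by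
  have hcont : Continuous fun p : ℝ × EuclideanSpace ℝ (Fin N) => x + p.1 • p.2 := by fun_prop
  set F := {p | x + p.1 • p.2 ∈ D}.indicator fun p => g (x + p.1 • p.2) * w p
  have hF : Measurable F :=
    ((hg.comp hcont.measurable).mul hw).indicator (hD.preimage hcont).measurableSet
  have hlhs (v) : ∫⁻ t in {t : ℝ | -((tMinus D x v : ℝ≥0∞) : EReal) < (t : ℝ) ∧
      (t : ℝ) < ((tPlus D x v : ℝ≥0∞) : EReal)}, g (x + t • v) * w (t, v) = ∫⁻ t, F (t, v) := by
    have hm : MeasurableSet {t : ℝ | x + t • v ∈ D} :=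
      (hD.preimage (by fun_prop : Continuous fun t : ℝ => x + t • v)).measurableSet
    rw [setOf_neg_tMinus_lt_and_lt_tPlus hD hconv hx, ← lintegral_indicator hm]
    rfl
  have hrhs (t : ℝ) (ht : t ≠ 0) :
      ∫⁻ y, F (t, t⁻¹ • (y - x)) = ∫⁻ y in D, g y * w (t, t⁻¹ • (y - x)) := by
    rw [← lintegral_indicator hD.measurableSet]
    refine lintegral_congr fun y => ?_
    have hy : x + t • t⁻¹ • (y - x) = y := by rw [smul_inv_smul₀ ht, add_sub_cancel]
    by_cases hyD : y ∈ D <;> simp [F, hy, hyD]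
  simp_rw [hlhs]
  rw [lintegral_lintegral_eq_setLIntegral_inv_smul_sub volume x hF, finrank_euclideanSpace_fin]
  exact setLIntegral_congr_fun (measurableSet_singleton 0).compl fun t ht => by rw [hrhs t ht]
end

section
/- Let D ⊂ ℝ^N be a bounded open set, let σ > 0, α > −σ, n ∈ ℕ, let 0 < a ≤ b, let h : ℝ^N → ℂ be a continuous function whose support is contained in the annulus {v ∈ ℝ^N : a ≤ |v| ≤ b}, and set R = sup{|x| : x ∈ D} < ∞. For x ∈ D with x ≠ 0, z ∈ ℝ^N with x + z ∈ D, and β ∈ ℝ, define N_{α+iβ}(x,z) = ∫_{ℝ∖{0}} h(−x/t)·exp(−(α+σ+iβ)·(t + 2n·(|t|/|x|)·τ(x+z, −x/|x|)))·|t|^{−N} dt. Then: (i) for all such x, z, β one has |N_{α+iβ}(x,z)| ≤ ∫_{ℝ∖{0}} |h(−x/t)|·e^{−(α+σ)t}·|t|^{−N} dt, and the integrand on the right vanishes unless |t| ≤ |x|/a ≤ R/a; (ii) ∫_D ( ∫_{ℝ∖{0}} |h(−x/t)|·e^{−(α+σ)t}·|t|^{−N} dt ) dx ≤ ( ∫_{−R/a}^{R/a}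 e^{−(α+σ)t} dt )·( ∫_{ℝ^N} |h(v)| dv ) < ∞. -/
/-!
The phase factor in `N_{α+iβ}` has modulus `e^{-(α+σ)(t+s)}` with `s ≥ 0`, which gives (i).
For (ii), swap the integrals by Tonelli: for fixed `t ≠ 0` the substitution `v = -x/t` turns the
`x`-integral into `|t|^N ∫ |h|`, cancelling `|t|^{-N}`, and the support of `h` cuts the
`t`-range down to `|t| ≤ R/a`.
-/

open MeasureTheory Set
open scoped ENNReal

/-- The kernel `N_{α+iβ}(x,z) = ∫_{ℝ∖{0}} h(-x/t)·
e^{-(α+σ+iβ)(t + 2n(|t|/|x|)τ(x+z, -x/|x|))}·|t|^{-N} dt`. -/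
noncomputable def Nker {N : ℕ} (D : Set (EuclideanSpace ℝ (Fin N)))
    (σ α : ℝ) (n : ℕ) (h : EuclideanSpace ℝ (Fin N) → ℂ)
    (β : ℝ) (x z : EuclideanSpace ℝ (Fin N)) : ℂ :=
  ∫ t in {t : ℝ | t ≠ 0},
    h (-(t⁻¹ • x)) *
      Complex.exp (-(((α + σ : ℝ) : ℂ) + (β : ℂ) * Complex.I) *
        ((t + (2*(n:ℝ)) * (|t| / ‖x‖) *
          (sojourn D (x + z) (-(‖x‖⁻¹ • x))).toReal : ℝ) : ℂ)) *
      (((|t| ^ N : ℝ)⁻¹ : ℝ) : ℂ)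

theorem lintegral_comp_inv_smul {E : Type*} [NormedAddCommGroup E] [NormedSpace ℝ E]
    [MeasurableSpace E] [BorelSpace E] [FiniteDimensional ℝ E] (μ : Measure E)
    [μ.IsAddHaarMeasure] (f : E → ℝ≥0∞) {r : ℝ} (hr : r ≠ 0) :
    ∫⁻ x, f (r⁻¹ • x) ∂μ = ENNReal.ofReal (|r| ^ Module.finrank ℝ E) * ∫⁻ x, f x ∂μ := by
  have hr' : r⁻¹ ≠ 0 := inv_ne_zero hr
  calc ∫⁻ x, f (r⁻¹ • x) ∂μ = ∫⁻ x, f x ∂(Measure.map (r⁻¹ • ·) μ) :=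
        (lintegral_map_equiv f (Homeomorph.smul (Units.mk0 r⁻¹ hr')).toMeasurableEquiv).symm
    _ = ENNReal.ofReal (|r| ^ Module.finrank ℝ E) * ∫⁻ x, f x ∂μ := by
        rw [Measure.map_addHaar_smul μ hr', lintegral_smul_measure, inv_pow, inv_inv, abs_pow,
          smul_eq_mul]

theorem abs_le_div_of_le_norm_inv_smul {E : Type*} [SeminormedAddCommGroup E]
    [NormedSpace ℝ E] {x : E} {t a : ℝ} (ha : 0 < a) (hle : a ≤ ‖t⁻¹ • x‖) :
    |t| ≤ ‖x‖ / a := by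
  rw [norm_smul, norm_inv, Real.norm_eq_abs] at hle
  rcases eq_or_ne t 0 with rfl | ht
  · simp only [abs_zero, inv_zero, zero_mul] at hle
    linarith
  rw [le_div_iff₀ ha]
  calc |t| * a ≤ |t| * (|t|⁻¹ * ‖x‖) := by gcongr
    _ = ‖x‖ := by field_simp

theorem norm_exp_neg_mul_ofReal_add_le {c β t s : ℝ} (hc : 0 ≤ c) (hs : 0 ≤ s) :
    ‖Complex.exp (-((c : ℂ) + β * Complex.I) * ((t + s : ℝ) : ℂ))‖ ≤ Real.exp (-c * t) := by
  have hre : (-((c : ℂ) + β * Complex.I) * ((t + s : ℝ) : ℂ)).re = -c * (t + s) := by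
    simp [Complex.mul_re]
  rw [Complex.norm_exp, hre, Real.exp_le_exp]
  nlinarith

noncomputable def kernelMajorant {N : ℕ} (c : ℝ) (h : EuclideanSpace ℝ (Fin N) → ℂ)
    (x : EuclideanSpace ℝ (Fin N)) (t : ℝ) : ℝ≥0∞ :=
  ENNReal.ofReal (‖h (-(t⁻¹ • x))‖ * Real.exp (-c * t) * (|t| ^ N)⁻¹)

section kernelMajorant

variable {N : ℕ} {c : ℝ} {h : EuclideanSpace ℝ (Fin N) → ℂ}

theorem ofReal_norm_Nker_le (D : Set (EuclideanSpace ℝ (Fin N))) {σ α : ℝ} (hασ : 0 ≤ α + σ)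
    (n : ℕ) (β : ℝ) (x z : EuclideanSpace ℝ (Fin N)) :
    ENNReal.ofReal ‖Nker D σ α n h β x z‖ ≤
      ∫⁻ t in {t : ℝ | t ≠ 0}, kernelMajorant (α + σ) h x t := by
  rw [ofReal_norm, Nker]
  refine (enorm_integral_le_lintegral_enorm _).trans (lintegral_mono fun t => ?_)
  rw [← ofReal_norm, kernelMajorant]
  refine ENNReal.ofReal_le_ofReal ?_
  rw [norm_mul, norm_mul, Complex.norm_real, Real.norm_of_nonneg (by positivity)]
  gcongr
  exact norm_exp_neg_mul_ofReal_add_le hασ (by positivity)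

theorem measurable_kernelMajorant (c : ℝ) (hh : Measurable h) :
    Measurable (Function.uncurry (kernelMajorant c h)) := by
  refine ENNReal.measurable_ofReal.comp (Measurable.mul (Measurable.mul ?_ ?_) ?_)
  · exact (hh.comp (measurable_snd.inv.smul measurable_fst).neg).norm
  · exact (Real.continuous_exp.comp (continuous_const_mul (-c))).measurable.comp measurable_snd
  · exact (measurable_snd.abs.pow_const N).inv

theorem kernelMajorant_eq_zero_of_div_lt_abs {a R t : ℝ} {x : EuclideanSpace ℝ (Fin N)}
    (ha : 0 < a) (hsupp : ∀ v, h v ≠ 0 → a ≤ ‖v‖) (hx : ‖x‖ ≤ R) (ht : R / a < |t|) :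
    kernelMajorant c h x t = 0 := by
  have hzero : h (-(t⁻¹ • x)) = 0 := by
    by_contra hne
    have hle := hsupp _ hne
    rw [norm_neg] at hle
    have := abs_le_div_of_le_norm_inv_smul ha hle
    have : ‖x‖ / a ≤ R / a := by gcongr
    linarith
  simp [kernelMajorant, hzero]

theorem lintegral_kernelMajorant {t : ℝ} (h : EuclideanSpace ℝ (Fin N) → ℂ) (ht : t ≠ 0) :
    ∫⁻ x, kernelMajorant c h x t =
      ENNReal.ofReal (Real.exp (-c * t)) * ∫⁻ v, ENNReal.ofReal ‖h v‖ := by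
  have hsplit : ∀ x, kernelMajorant c h x t =
      ENNReal.ofReal ‖h ((-t)⁻¹ • x)‖ * ENNReal.ofReal (Real.exp (-c * t) * (|t| ^ N)⁻¹) := by
    intro x
    rw [kernelMajorant, mul_assoc, ENNReal.ofReal_mul (norm_nonneg _), inv_neg, neg_smul]
  simp_rw [hsplit]
  rw [lintegral_mul_const' _ _ ENNReal.ofReal_ne_top,
    lintegral_comp_inv_smul volume (fun v => ENNReal.ofReal ‖h v‖) (neg_ne_zero.2 ht),
    finrank_euclideanSpace_fin, abs_neg, mul_right_comm, ← ENNReal.ofReal_mul (by positivity)]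
  congr 2
  field_simp

theorem setLIntegral_kernelMajorant_le {D : Set (EuclideanSpace ℝ (Fin N))} {a R t : ℝ}
    (ha : 0 < a) (hsupp : ∀ v, h v ≠ 0 → a ≤ ‖v‖) (hDR : ∀ x ∈ D, ‖x‖ ≤ R) (ht : t ≠ 0) :
    ∫⁻ x in D, kernelMajorant c h x t ≤
      (Icc (-(R / a)) (R / a)).indicator (fun t => ENNReal.ofReal (Real.exp (-c * t))) t *
        ∫⁻ v, ENNReal.ofReal ‖h v‖ := by
  by_cases htR : t ∈ Icc (-(R / a)) (R / a)
  · rw [indicator_of_mem htR, ← lintegral_kernelMajorant h ht]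
    exact setLIntegral_le_lintegral _ _
  · rw [indicator_of_notMem htR, zero_mul, ← lintegral_zero (μ := volume.restrict D)]
    refine setLIntegral_mono measurable_const fun x hx => ?_
    rw [mem_Icc, ← abs_le, not_le] at htR
    exact (kernelMajorant_eq_zero_of_div_lt_abs ha hsupp (hDR x hx) htR).le

theorem lintegral_lintegral_kernelMajorant_le {D : Set (EuclideanSpace ℝ (Fin N))} {a R : ℝ}
    (hh : Measurable h) (ha : 0 < a) (hsupp : ∀ v, h v ≠ 0 → a ≤ ‖v‖)
    (hDR : ∀ x ∈ D, ‖x‖ ≤ R) (hR : 0 ≤ R) :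
    ∫⁻ x in D, ∫⁻ t in {t : ℝ | t ≠ 0}, kernelMajorant c h x t ≤
      ENNReal.ofReal (∫ t in (-(R / a))..(R / a), Real.exp (-c * t)) *
        ∫⁻ v, ENNReal.ofReal ‖h v‖ := by
  set S := Icc (-(R / a)) (R / a)
  have hexp : Continuous fun t : ℝ => Real.exp (-c * t) := by fun_prop
  calc ∫⁻ x in D, ∫⁻ t in {t : ℝ | t ≠ 0}, kernelMajorant c h x t
      = ∫⁻ t in {t : ℝ | t ≠ 0}, ∫⁻ x in D, kernelMajorant c h x t :=
        lintegral_lintegral_swap (measurable_kernelMajorant c hh).aemeasurable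
    _ ≤ ∫⁻ t in {t : ℝ | t ≠ 0},
          S.indicator (fun t => ENNReal.ofReal (Real.exp (-c * t))) t *
            ∫⁻ v, ENNReal.ofReal ‖h v‖ :=
        setLIntegral_mono' (measurableSet_singleton 0).compl
          fun t ht => setLIntegral_kernelMajorant_le ha hsupp hDR ht
    _ ≤ ∫⁻ t, S.indicator (fun t => ENNReal.ofReal (Real.exp (-c * t))) t *
            ∫⁻ v, ENNReal.ofReal ‖h v‖ :=
        setLIntegral_le_lintegral _ _
    _ = ENNReal.ofReal (∫ t in (-(R / a))..(R / a), Real.exp (-c * t)) *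
          ∫⁻ v, ENNReal.ofReal ‖h v‖ := by
        have hRa : -(R / a) ≤ R / a := by
          have : 0 ≤ R / a := by positivity
          linarith
        rw [lintegral_mul_const _ (hexp.measurable.ennreal_ofReal.indicator measurableSet_Icc),
          lintegral_indicator measurableSet_Icc, intervalIntegral.integral_of_le hRa,
          ← integral_Icc_eq_integral_Ioc, ofReal_integral_eq_lintegral_ofReal
            hexp.integrableOn_Icc (Filter.Eventually.of_forall fun t => (Real.exp_pos _).le)]

end kernelMajorant

theorem lintegral_ofReal_norm_lt_top {N : ℕ} {h : EuclideanSpace ℝ (Fin N) → ℂ}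
    (hc : Continuous h) {b : ℝ} (hsupp : ∀ v, h v ≠ 0 → ‖v‖ ≤ b) :
    ∫⁻ v, ENNReal.ofReal ‖h v‖ < ∞ := by
  have hcs : HasCompactSupport h :=
    HasCompactSupport.intro (isCompact_closedBall 0 b) fun v hv => by
      by_contra hne
      exact hv (mem_closedBall_zero_iff.2 (hsupp v hne))
  simp_rw [ofReal_norm]
  exact (hc.integrable_of_hasCompactSupport hcs).2

theorem stmt16_general {N : ℕ} (D : Set (EuclideanSpace ℝ (Fin N)))
    (σ α : ℝ) (hα : -σ < α) (n : ℕ)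
    (a b : ℝ) (ha : 0 < a)
    (h : EuclideanSpace ℝ (Fin N) → ℂ) (hc : Continuous h)
    (hsupp : ∀ v, h v ≠ 0 → a ≤ ‖v‖ ∧ ‖v‖ ≤ b)
    (R : ℝ) (hR : IsLUB ((fun x : EuclideanSpace ℝ (Fin N) => ‖x‖) '' D) R) :
    (∀ x ∈ D, x ≠ 0 → ∀ z : EuclideanSpace ℝ (Fin N), x + z ∈ D → ∀ β : ℝ,
      (ENNReal.ofReal (‖Nker D σ α n h β x z‖) ≤
        ∫⁻ t in {t : ℝ | t ≠ 0},
          ENNReal.ofReal (‖h (-(t⁻¹ • x))‖ *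
            Real.exp (-(α + σ) * t) * (|t| ^ N)⁻¹)) ∧
      (∀ t : ℝ, t ≠ 0 → h (-(t⁻¹ • x)) ≠ 0 → |t| ≤ ‖x‖ / a ∧ ‖x‖ / a ≤ R / a)) ∧
    ((∫⁻ x in D, ∫⁻ t in {t : ℝ | t ≠ 0},
        ENNReal.ofReal (‖h (-(t⁻¹ • x))‖ *
          Real.exp (-(α + σ) * t) * (|t| ^ N)⁻¹))
      ≤ ENNReal.ofReal (∫ t in (-(R/a))..(R/a), Real.exp (-(α + σ) * t)) *
          ∫⁻ v, ENNReal.ofReal (‖h v‖) ∧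
     ENNReal.ofReal (∫ t in (-(R/a))..(R/a), Real.exp (-(α + σ) * t)) *
          (∫⁻ v, ENNReal.ofReal (‖h v‖)) < ∞) := by
  have hDR : ∀ x ∈ D, ‖x‖ ≤ R := fun x hx => hR.1 ⟨x, hx, rfl⟩
  refine ⟨fun x hx _ z _ β => ⟨ofReal_norm_Nker_le D (by linarith) n β x z, fun t _ hne => ?_⟩,
    ?_, ENNReal.mul_lt_top ENNReal.ofReal_lt_top
      (lintegral_ofReal_norm_lt_top hc fun v hv => (hsupp v hv).2)⟩
  · have hle := (hsupp _ hne).1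
    rw [norm_neg] at hle
    exact ⟨abs_le_div_of_le_norm_inv_smul ha hle, by gcongr; exact hDR x hx⟩
  · rcases D.eq_empty_or_nonempty with rfl | ⟨x₀, hx₀⟩
    · simp
    exact lintegral_lintegral_kernelMajorant_le hc.measurable ha (fun v hv => (hsupp v hv).1) hDR
      ((norm_nonneg x₀).trans (hDR x₀ hx₀))

/-- With `R` the supremum of `‖x‖` over `D`:
(i) `|N_{α+iβ}(x,z)| ≤ ∫_{ℝ∖{0}} |h(-x/t)|·e^{-(α+σ)t}·|t|^{-N} dt`, the integrand
vanishing unless `|t| ≤ |x|/a ≤ R/a`;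
(ii) `∫_D (∫_{ℝ∖{0}} |h(-x/t)| e^{-(α+σ)t} |t|^{-N} dt) dx
  ≤ (∫_{-R/a}^{R/a} e^{-(α+σ)t} dt)·(∫_{ℝ^N} |h(v)| dv) < ∞`. -/
theorem stmt16 {N : ℕ} (D : Set (EuclideanSpace ℝ (Fin N))) (hD : IsOpen D)
    (hDb : Bornology.IsBounded D)
    (σ α : ℝ) (hσ : 0 < σ) (hα : -σ < α) (n : ℕ)
    (a b : ℝ) (ha : 0 < a) (hab : a ≤ b)
    (h : EuclideanSpace ℝ (Fin N) → ℂ) (hc : Continuous h)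
    (hsupp : ∀ v, h v ≠ 0 → a ≤ ‖v‖ ∧ ‖v‖ ≤ b)
    (R : ℝ) (hR : IsLUB ((fun x : EuclideanSpace ℝ (Fin N) => ‖x‖) '' D) R) :
    (∀ x ∈ D, x ≠ 0 → ∀ z : EuclideanSpace ℝ (Fin N), x + z ∈ D → ∀ β : ℝ,
      (ENNReal.ofReal (‖Nker D σ α n h β x z‖) ≤
        ∫⁻ t in {t : ℝ | t ≠ 0},
          ENNReal.ofReal (‖h (-(t⁻¹ • x))‖ *
            Real.exp (-(α + σ) * t) * (|t| ^ N)⁻¹)) ∧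
      (∀ t : ℝ, t ≠ 0 → h (-(t⁻¹ • x)) ≠ 0 → |t| ≤ ‖x‖ / a ∧ ‖x‖ / a ≤ R / a)) ∧
    ((∫⁻ x in D, ∫⁻ t in {t : ℝ | t ≠ 0},
        ENNReal.ofReal (‖h (-(t⁻¹ • x))‖ *
          Real.exp (-(α + σ) * t) * (|t| ^ N)⁻¹))
      ≤ ENNReal.ofReal (∫ t in (-(R/a))..(R/a), Real.exp (-(α + σ) * t)) *
          ∫⁻ v, ENNReal.ofReal (‖h v‖) ∧
     ENNReal.ofReal (∫ t in (-(R/a))..(R/a), Real.exp (-(α + σ) * t)) *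
          (∫⁻ v, ENNReal.ofReal (‖h v‖)) < ∞) :=
  stmt16_general D σ α hα n a b ha h hc hsupp R hR
end
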